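/- arXiv:2404.03371 — 6 statements merged into one kernel-verified Lean document; each statement's English description precedes it below -/
import Mathlib

section
/- Let C_d = {x ∈ ℝ^d : x_i ≤ 0 for all i}, let b' ∈ ℝ^d, and let x* be a minimizer over C_d of g(x) = ‖x − b'‖² + (𝟙ᵀ(x − b'))². Then 𝟙ᵀ x* ≤ 𝟙ᵀ b'. -/
open Finset

theorem stmt3 (d : ℕ) (b' xs : Fin d → ℝ)
    (hxs : ∀ i, xs i ≤ 0)
    (hmin : ∀ y : Fin d → ℝ, (∀ i, y i ≤ 0) →
      (∑ i, (xs i - b' i) ^ 2) + (∑ i, (xs i - b' i)) ^ 2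
        ≤ (∑ i, (y i - b' i) ^ 2) + (∑ i, (y i - b' i)) ^ 2) :
    (∑ i, xs i) ≤ ∑ i, b' i := by
  by_contra h
  push_neg at h
  have hd : 0 < d := by
    rcases Nat.eq_zero_or_pos d with h0 | h0
    · subst h0; simp at h
    · exact h0
  have hdR : (0 : ℝ) < (d : ℝ) := by exact_mod_cast hd
  set t : ℝ := (∑ i, (xs i - b' i)) with ht
  have hts : t = (∑ i, xs i) - ∑ i, b' i := by
    rw [ht, Finset.sum_sub_distrib]
  have htpos : 0 < t := by rw [hts]; linarith
  set ε : ℝ := t / d with hε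
  have hεpos : 0 < ε := div_pos htpos hdR
  have hde : (d : ℝ) * ε = t := by
    rw [hε]; field_simp
  have hy : ∀ i, xs i - ε ≤ 0 := fun i => by linarith [hxs i]
  have h1 := hmin (fun i => xs i - ε) hy
  have hsum1 : (∑ i, ((xs i - ε) - b' i)) = t - d * ε := by
    have : ∀ i ∈ Finset.univ, ((xs i - ε) - b' i) = (xs i - b' i) - ε :=
      fun i _ => by ring
    rw [Finset.sum_congr rfl this, Finset.sum_sub_distrib, Finset.sum_const,
      Finset.card_univ, Fintype.card_fin, ht, nsmul_eq_mul]
  have hsum2 : (∑ i, ((xs i - ε) - b' i) ^ 2)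
      = (∑ i, (xs i - b' i) ^ 2) - 2 * ε * t + d * ε ^ 2 := by
    have : ∀ i ∈ Finset.univ, ((xs i - ε) - b' i) ^ 2
        = (xs i - b' i) ^ 2 - 2 * ε * (xs i - b' i) + ε ^ 2 :=
      fun i _ => by ring
    rw [Finset.sum_congr rfl this]
    rw [Finset.sum_add_distrib, Finset.sum_sub_distrib, ← Finset.mul_sum,
      Finset.sum_const, Finset.card_univ, Fintype.card_fin, nsmul_eq_mul, ht]
  rw [hsum1, hsum2] at h1
  nlinarith [h1, hde, htpos, hεpos, sq_nonneg t]
end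

section
/- Let b ∈ ℝ^d with b_1 ≥ b_2 ≥ ⋯ ≥ b_d, set S_i := b_1 + ⋯ + b_i (with S_0 = 0), and use conventions b_0 = +∞, b_{d+1} = −∞, S_{d+1} = S_d. Then there exists exactly one index k ∈ {0,1,…,d} such that b_k ≥ S_k/(k+1) and b_{k+1} < S_{k+1}/(k+2). -/
open Finset

/-!
Writing `S k = ∑ i ∈ Icc 1 k, b i`, the condition `S k / (k + 1) ≤ b k` is `S k ≤ (k + 1) * b k`,
and at index `k + 1` it reads `S k ≤ (k + 1) * b (k + 1)`. Since `b` is nonincreasing, the condition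
at `k + 1` therefore implies the one at `k`: the indices satisfying it form an initial segment of
`{0, …, d}`, and the required `k` is exactly the last index of that segment.
-/

section DownwardClosed

variable {P : ℕ → Prop} {d : ℕ}

theorem Nat.of_le_of_forall_succ_imp (hP : ∀ n < d, P (n + 1) → P n) {i j : ℕ} (hij : i ≤ j)
    (hjd : j ≤ d) (hj : P j) : P i := by
  induction j, hij using Nat.le_induction with
  | base => exact hj
  | succ j _ ih => exact ih (by omega) (hP j (by omega) hj)

theorem Nat.le_of_forall_succ_imp_of_not_succ (hP : ∀ n < d, P (n + 1) → P n) {k m : ℕ}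
    (hk : k = d ∨ ¬ P (k + 1)) (hmd : m ≤ d) (hm : P m) : m ≤ k := by
  by_contra! hkm
  rcases hk with rfl | hk
  · omega
  · exact hk (Nat.of_le_of_forall_succ_imp hP hkm hmd hm)

theorem Nat.existsUnique_last_of_forall_succ_imp (h0 : P 0) (hP : ∀ n < d, P (n + 1) → P n) :
    ∃! k, k ≤ d ∧ P k ∧ (k = d ∨ ¬ P (k + 1)) := by
  classical
  refine ⟨Nat.findGreatest P d, ⟨Nat.findGreatest_le d, Nat.findGreatest_spec (zero_le d) h0, ?_⟩,
    fun k ⟨hkd, hk, hk'⟩ => le_antisymm ?_ ?_⟩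
  · refine (Nat.findGreatest_le d).eq_or_lt.imp_right fun hlt => ?_
    exact Nat.findGreatest_is_greatest (Nat.lt_succ_self _) hlt
  · exact Nat.le_findGreatest hkd hk
  · exact Nat.le_of_forall_succ_imp_of_not_succ hP hk' (Nat.findGreatest_le d)
      (Nat.findGreatest_spec (zero_le d) h0)

end DownwardClosed

theorem sum_Icc_div_le_iff (b : ℕ → ℝ) (k : ℕ) :
    (∑ i ∈ Icc 1 k, b i) / ((k : ℝ) + 1) ≤ b k ↔ ∑ i ∈ Icc 1 k, b i ≤ ((k : ℝ) + 1) * b k := by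
  rw [div_le_iff₀ (by positivity), mul_comm]

theorem sum_Icc_succ_div_le_iff (b : ℕ → ℝ) (k : ℕ) :
    (∑ i ∈ Icc 1 (k + 1), b i) / (((k + 1 : ℕ) : ℝ) + 1) ≤ b (k + 1) ↔
      ∑ i ∈ Icc 1 k, b i ≤ ((k : ℝ) + 1) * b (k + 1) := by
  rw [sum_Icc_div_le_iff, sum_Icc_succ_top (by omega)]
  push_cast
  constructor <;> intro h <;> linarith

theorem stmt5_general (d : ℕ) (b : ℕ → ℝ)
    (hb : ∀ i j, 1 ≤ i → i ≤ j → j ≤ d → b j ≤ b i) :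
    ∃! k : ℕ, k ≤ d ∧
      (k = 0 ∨ (∑ i ∈ Finset.Icc 1 k, b i) / ((k : ℝ) + 1) ≤ b k) ∧
      (k = d ∨ b (k + 1) < (∑ i ∈ Finset.Icc 1 (k + 1), b i) / ((k : ℝ) + 2)) := by
  have hstop (k : ℕ) : ¬ (k + 1 = 0 ∨ (∑ i ∈ Icc 1 (k + 1), b i) / (((k + 1 : ℕ) : ℝ) + 1) ≤ b (k + 1))
      ↔ b (k + 1) < (∑ i ∈ Icc 1 (k + 1), b i) / ((k : ℝ) + 2) := by
    push_cast
    rw [add_assoc, one_add_one_eq_two]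
    simp
  simp_rw [← hstop]
  refine Nat.existsUnique_last_of_forall_succ_imp (Or.inl rfl) fun n hn hsucc => ?_
  rcases Nat.eq_zero_or_pos n with rfl | hpos
  · exact Or.inl rfl
  have hmean := (sum_Icc_succ_div_le_iff b n).1 (hsucc.resolve_left n.succ_ne_zero)
  have hmono : b (n + 1) ≤ b n := hb n (n + 1) hpos (by omega) hn
  exact Or.inr ((sum_Icc_div_le_iff b n).2
    (hmean.trans (mul_le_mul_of_nonneg_left hmono (by positivity))))

theorem stmt5 (d : ℕ) (hd : 0 < d) (b : ℕ → ℝ)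
    (hb : ∀ i j, 1 ≤ i → i ≤ j → j ≤ d → b j ≤ b i) :
    ∃! k : ℕ, k ≤ d ∧
      (k = 0 ∨ (∑ i ∈ Finset.Icc 1 k, b i) / ((k : ℝ) + 1) ≤ b k) ∧
      (k = d ∨ b (k + 1) < (∑ i ∈ Finset.Icc 1 (k + 1), b i) / ((k : ℝ) + 2)) :=
  stmt5_general d b hb
end

section
/- Let b ∈ ℝ^d satisfy b_1 ≥ ⋯ ≥ b_d, let S_i be partial sums, and let k₀ ∈ {0,…,d} satisfy b_{k₀} ≥ S_{k₀}/(k₀+1) (or k₀ = 0) and b_{k₀+1} < S_{k₀+1}/(k₀+2) (or k₀ = d). Define x*_i = (1/2)(S_{k₀}/(1+k₀) − b_i) for i ≤ k₀ and x*_i = 0 otherwise, and λ*_i = 0 for i ≤ k₀ and λ*_i = S_{k₀}/(1+k₀) − b_i otherwise. Then (x*, λ*) satisfies the KKT conditions: Q_d x* + b + λ* = 0, x* ≤ 0, λ* ≥ 0, and x*ᵀλ* = 0, where Q_d = 2I_d + 2J_d. -/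
open Matrix Finset

def Qmat (d : ℕ) : Matrix (Fin d) (Fin d) ℝ :=
  (2 : ℝ) • (1 : Matrix (Fin d) (Fin d) ℝ) + (2 : ℝ) • Matrix.of (fun _ _ => (1 : ℝ))

/- With the active set `A = {i | i < k₀}` and threshold `t = S / (1 + k₀)`, the candidate
`x* = (t - b)/2` on `A`, `λ* = t - b` off `A` has `∑ x* = (|A| t - ∑_A b)/2 = -t/2`, which is
exactly what stationarity `2 x* + 2 (∑ x*) 𝟙 + b + λ* = 0` requires. Complementarity holds
coordinatewise by construction, and the sign conditions reduce to `t ≤ b i` on `A` and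
`b i ≤ t` off `A`; since `b` is antitone it suffices to check them at the two boundary indices
`k₀ - 1` and `k₀`, which is what the hypotheses on `b_{k₀}` and `b_{k₀+1}` say. -/

theorem Qmat_mulVec_apply {d : ℕ} (x : Fin d → ℝ) (i : Fin d) :
    (Qmat d *ᵥ x) i = 2 * x i + 2 * ∑ j, x j := by
  simp [Qmat, mulVec, dotProduct, add_mul, sum_add_distrib, one_apply, mul_sum]

section ActiveSet

variable {d : ℕ} (p : Fin d → Prop) [DecidablePred p] (b : Fin d → ℝ) (t : ℝ)

noncomputable def activeSetPrimal (i : Fin d) : ℝ :=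
  if p i then (1 / 2 : ℝ) * (t - b i) else 0

noncomputable def activeSetDual (i : Fin d) : ℝ :=
  if p i then 0 else t - b i

theorem sum_activeSetPrimal :
    ∑ i, activeSetPrimal p b t i = (#{i | p i} * t - ∑ i, if p i then b i else 0) / 2 := by
  rw [← sum_filter]
  simp only [activeSetPrimal, ← sum_filter, ← mul_sum, sum_sub_distrib, sum_const, nsmul_eq_mul]
  ring

theorem Qmat_mulVec_activeSetPrimal_add_add_activeSetDual
    (h : ((#{i | p i} : ℝ) + 1) * t = ∑ i, if p i then b i else 0) :
    Qmat d *ᵥ activeSetPrimal p b t + b + activeSetDual p b t = 0 := by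
  have hsum : ∑ i, activeSetPrimal p b t i = -(t / 2) := by
    rw [sum_activeSetPrimal, ← h]
    ring
  funext i
  rw [Pi.add_apply, Pi.add_apply, Qmat_mulVec_apply, hsum, Pi.zero_apply]
  unfold activeSetPrimal activeSetDual
  split_ifs <;> ring

theorem activeSetPrimal_nonpos (h : ∀ i, p i → t ≤ b i) (i : Fin d) :
    activeSetPrimal p b t i ≤ 0 := by
  unfold activeSetPrimal
  split_ifs with hi
  · linarith [h i hi]
  · rfl

theorem activeSetDual_nonneg (h : ∀ i, ¬p i → b i ≤ t) (i : Fin d) :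
    0 ≤ activeSetDual p b t i := by
  unfold activeSetDual
  split_ifs with hi
  · rfl
  · linarith [h i hi]

theorem activeSetPrimal_dotProduct_activeSetDual :
    activeSetPrimal p b t ⬝ᵥ activeSetDual p b t = 0 :=
  sum_eq_zero fun i _ => by
    unfold activeSetPrimal activeSetDual
    split_ifs <;> simp

end ActiveSet

section Antitone

variable {d k : ℕ} {b : Fin d → ℝ} {t : ℝ}

theorem Antitone.le_of_val_lt (hb : Antitone b) (hk : k ≤ d)
    (hlast : ∀ i : Fin d, (i : ℕ) + 1 = k → t ≤ b i) (i : Fin d) (hi : (i : ℕ) < k) :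
    t ≤ b i :=
  (hlast ⟨k - 1, by omega⟩ (by simp only; omega)).trans (hb (Fin.mk_le_mk.mpr (by omega)))

theorem Antitone.le_of_le_val (hb : Antitone b)
    (hnext : ∀ i : Fin d, (i : ℕ) = k → b i ≤ t) (i : Fin d) (hi : k ≤ (i : ℕ)) :
    b i ≤ t :=
  (hb (Fin.mk_le_mk.mpr hi : (⟨k, by omega⟩ : Fin d) ≤ i)).trans (hnext _ rfl)

end Antitone

theorem lt_div_one_add_of_lt_add_div_add_two {c S k : ℝ} (hk : 0 ≤ k)
    (h : c < (S + c) / (k + 2)) : c < S / (1 + k) := by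
  rw [lt_div_iff₀ (by positivity)] at h ⊢
  linarith

theorem stmt7 (d : ℕ) (b : Fin d → ℝ)
    (hb : ∀ i j : Fin d, i ≤ j → b j ≤ b i)
    (k₀ : ℕ) (hk₀ : k₀ ≤ d)
    (S : ℝ) (hS : S = ∑ i : Fin d, if (i : ℕ) < k₀ then b i else 0)
    (hlow : ∀ i : Fin d, (i : ℕ) + 1 = k₀ → S / ((k₀ : ℝ) + 1) ≤ b i)
    (hhigh : ∀ i : Fin d, (i : ℕ) = k₀ → b i < (S + b i) / ((k₀ : ℝ) + 2))
    (xs lam : Fin d → ℝ)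
    (hx : ∀ i : Fin d, xs i =
      if (i : ℕ) < k₀ then (1 / 2 : ℝ) * (S / (1 + (k₀ : ℝ)) - b i) else 0)
    (hlam : ∀ i : Fin d, lam i =
      if (i : ℕ) < k₀ then 0 else S / (1 + (k₀ : ℝ)) - b i) :
    (Qmat d).mulVec xs + b + lam = 0 ∧ (∀ i, xs i ≤ 0) ∧ (∀ i, 0 ≤ lam i)
      ∧ xs ⬝ᵥ lam = 0 := by
  set p : Fin d → Prop := fun i => (i : ℕ) < k₀
  set t := S / (1 + (k₀ : ℝ)) with ht
  have hthreshold : ((#{i | p i} : ℝ) + 1) * t = ∑ i, if p i then b i else 0 := by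
    rw [Fin.card_filter_val_lt, min_eq_right hk₀, ← hS, ht, add_comm]
    field_simp
  obtain rfl : xs = activeSetPrimal p b t := funext hx
  obtain rfl : lam = activeSetDual p b t := funext hlam
  refine ⟨Qmat_mulVec_activeSetPrimal_add_add_activeSetDual p b t hthreshold,
    activeSetPrimal_nonpos p b t fun i hi => ?_, activeSetDual_nonneg p b t fun i hi => ?_,
    activeSetPrimal_dotProduct_activeSetDual p b t⟩
  · refine Antitone.le_of_val_lt hb hk₀ (fun j hj => ?_) i hi
    rw [ht, add_comm]
    exact hlow j hj
  · refine Antitone.le_of_le_val hb (fun j hj => ?_) i (not_lt.mp hi)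
    exact (lt_div_one_add_of_lt_add_div_add_two k₀.cast_nonneg (hhigh j hj)).le
end

section
/- In the loopy Laplacian row problem for a row i with a self-loop, if ∑_j A'_{ij} < 0 (where A' is the clipped version of row i of A), then the optimal solution l* satisfies 𝟙ᵀ l* = 0; that is, the self-loop weight of the optimal Laplacian row is zero. -/
open Finset

theorem stmt14 (n : ℕ) (A : Matrix (Fin n) (Fin n) ℝ) (i : Fin n)
    (N : Finset (Fin n)) (hiN : i ∉ N)
    (A' : Fin n → ℝ)
    (hA' : ∀ j, A' j = if j = i then max 0 (A i i)
                        else if j ∈ N then min 0 (A i j) else 0)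
    (hsum : (∑ j, A' j) < 0)
    (l : Fin n → ℝ)
    (hfeas : 0 ≤ l i ∧ (∀ j ∈ N, l j ≤ 0) ∧ (∀ j, j ≠ i → j ∉ N → l j = 0)
      ∧ 0 ≤ ∑ j, l j)
    (hopt : ∀ l' : Fin n → ℝ, 0 ≤ l' i → (∀ j ∈ N, l' j ≤ 0) →
      (∀ j, j ≠ i → j ∉ N → l' j = 0) → 0 ≤ ∑ j, l' j →
      (∑ j, (A i j - l j) ^ 2) ≤ ∑ j, (A i j - l' j) ^ 2) :
    (∑ j, l j) = 0 := by
  obtain ⟨hli, hlN, hl0, hlsum⟩ := hfeas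
  by_contra hne
  have hs : 0 < ∑ j, l j := lt_of_le_of_ne hlsum (Ne.symm hne)
  set s := ∑ j, l j with hsdef
  set a := ∑ j, A' j with hadef
  have hsa : 0 < s - a := by linarith
  set t := s / (s - a) with htdef
  have ht0 : 0 < t := div_pos hs hsa
  have ht1 : t < 1 := (div_lt_one hsa).mpr (by linarith)
  set l' : Fin n → ℝ := fun j => (1 - t) * l j + t * A' j with hl'def
  have hA'i : 0 ≤ A' i := by rw [hA' i]; simp
  have hA'N : ∀ j ∈ N, A' j ≤ 0 := by
    intro j hj
    have hji : j ≠ i := by rintro rfl; exact hiN hj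
    rw [hA' j, if_neg hji, if_pos hj]
    exact min_le_left _ _
  have hA'0 : ∀ j, j ≠ i → j ∉ N → A' j = 0 := by
    intro j hji hjN; rw [hA' j, if_neg hji, if_neg hjN]
  -- feasibility of l'
  have h1 : 0 ≤ l' i := by
    simp only [hl'def]; nlinarith
  have h2 : ∀ j ∈ N, l' j ≤ 0 := by
    intro j hj
    have h := hlN j hj; have h' := hA'N j hj
    simp only [hl'def]; nlinarith
  have h3 : ∀ j, j ≠ i → j ∉ N → l' j = 0 := by
    intro j hji hjN
    simp only [hl'def, hl0 j hji hjN, hA'0 j hji hjN]; ring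
  have hts : t * (s - a) = s := by
    rw [htdef, div_mul_cancel₀ _ (ne_of_gt hsa)]
  have hsum' : ∑ j, l' j = 0 := by
    have h : ∑ j, l' j = (1 - t) * s + t * a := by
      simp only [hl'def]
      rw [Finset.sum_add_distrib, ← Finset.mul_sum, ← Finset.mul_sum]
    rw [h]; nlinarith [hts]
  -- termwise projection inequality
  have hG : ∀ j, (A i j - A' j) ^ 2 ≤ (A i j - l j) ^ 2 := by
    intro j
    by_cases hji : j = i
    · subst hji
      rw [hA' j, if_pos rfl]
      rcases le_total 0 (A j j) with h | h
      · rw [max_eq_right h]; simp [sq_nonneg]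
      · rw [max_eq_left h]; nlinarith
    · by_cases hjN : j ∈ N
      · rw [hA' j, if_neg hji, if_pos hjN]
        have h := hlN j hjN
        rcases le_total (A i j) 0 with hc | hc
        · rw [min_eq_right hc]; simp [sq_nonneg]
        · rw [min_eq_left hc]; nlinarith
      · rw [hA' j, if_neg hji, if_neg hjN, hl0 j hji hjN]
  have hGsum : ∑ j, (A i j - A' j) ^ 2 ≤ ∑ j, (A i j - l j) ^ 2 :=
    Finset.sum_le_sum fun j _ => hG j
  -- some coordinate differs
  have hex : ∃ j, l j ≠ A' j := by
    by_contra h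
    push_neg at h
    have : s = a := Finset.sum_congr rfl fun j _ => h j
    linarith
  obtain ⟨j0, hj0⟩ := hex
  have hD : 0 < ∑ j, (l j - A' j) ^ 2 := by
    have h0 : 0 < (l j0 - A' j0) ^ 2 :=
      lt_of_le_of_ne (sq_nonneg _) (Ne.symm (pow_ne_zero 2 (sub_ne_zero.mpr hj0)))
    exact Finset.sum_pos' (fun j _ => sq_nonneg _) ⟨j0, Finset.mem_univ _, h0⟩
  -- convexity identity
  have hid : ∑ j, (A i j - l' j) ^ 2 =
      (1 - t) * (∑ j, (A i j - l j) ^ 2) + t * (∑ j, (A i j - A' j) ^ 2)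
        - t * (1 - t) * (∑ j, (l j - A' j) ^ 2) := by
    simp only [Finset.mul_sum]
    rw [← Finset.sum_add_distrib, ← Finset.sum_sub_distrib]
    exact Finset.sum_congr rfl fun j _ => by simp only [hl'def]; ring
  have hopt' := hopt l' h1 h2 h3 (le_of_eq hsum'.symm)
  rw [hid] at hopt'
  nlinarith [mul_pos (mul_pos ht0 (by linarith : (0:ℝ) < 1 - t)) hD,
    mul_le_mul_of_nonneg_left hGsum (le_of_lt ht0)]
end

section
/- In the loopy Laplacian row problem for a row i with a self-loop, the optimal solution l* satisfies 𝟙ᵀ l* > 0 if and only if ∑_j A'_{ij} > 0, where A' is the clipped row of A. -/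
open Finset

theorem stmt15 (n : ℕ) (A : Matrix (Fin n) (Fin n) ℝ) (i : Fin n)
    (N : Finset (Fin n)) (hiN : i ∉ N)
    (A' : Fin n → ℝ)
    (hA' : ∀ j, A' j = if j = i then max 0 (A i i)
                        else if j ∈ N then min 0 (A i j) else 0)
    (l : Fin n → ℝ)
    (hfeas : 0 ≤ l i ∧ (∀ j ∈ N, l j ≤ 0) ∧ (∀ j, j ≠ i → j ∉ N → l j = 0)
      ∧ 0 ≤ ∑ j, l j)
    (hopt : ∀ l' : Fin n → ℝ, 0 ≤ l' i → (∀ j ∈ N, l' j ≤ 0) →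
      (∀ j, j ≠ i → j ∉ N → l' j = 0) → 0 ≤ ∑ j, l' j →
      (∑ j, (A i j - l j) ^ 2) ≤ ∑ j, (A i j - l' j) ^ 2) :
    (0 < ∑ j, l j) ↔ 0 < ∑ j, A' j := by
  obtain ⟨hli, hlN, hl0, hlsum⟩ := hfeas
  -- per-coordinate projection (obtuse angle) property
  have hproj : ∀ j, (A' j - l j)^2 ≤ (A i j - l j) * (A' j - l j) := by
    intro j
    by_cases hji : j = i
    · subst hji
      rw [hA' j, if_pos rfl]
      rcases le_or_gt 0 (A j j) with h | h
      · rw [max_eq_right h]; nlinarith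
      · rw [max_eq_left h.le]; nlinarith [hli]
    · by_cases hjN : j ∈ N
      · rw [hA' j, if_neg hji, if_pos hjN]
        rcases le_or_gt (A i j) 0 with h | h
        · rw [min_eq_right h]; nlinarith
        · rw [min_eq_left h.le]; nlinarith [hlN j hjN]
      · have hz := hl0 j hji hjN
        rw [hA' j, if_neg hji, if_neg hjN, hz]; nlinarith
  have hAi' : 0 ≤ A' i := by rw [hA' i, if_pos rfl]; exact le_max_left _ _
  -- key: a feasible step toward A' forces l = A'
  have key : ∀ t : ℝ, 0 < t → t ≤ 1 → 0 ≤ (1-t) * (∑ j, l j) + t * (∑ j, A' j) →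
      ∀ j, l j = A' j := by
    intro t ht0 ht1 htsum
    set l' : Fin n → ℝ := fun j => l j + t * (A' j - l j) with hl'def
    have h1 : 0 ≤ l' i := by simp only [hl'def]; nlinarith [hli, hAi']
    have h2 : ∀ j ∈ N, l' j ≤ 0 := by
      intro j hj
      have hji : j ≠ i := fun h => hiN (h ▸ hj)
      have hA'j : A' j ≤ 0 := by
        rw [hA' j, if_neg hji, if_pos hj]; exact min_le_left _ _
      simp only [hl'def]; nlinarith [hlN j hj]
    have h3 : ∀ j, j ≠ i → j ∉ N → l' j = 0 := by
      intro j hji hjN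
      have hz1 := hl0 j hji hjN
      have hz2 : A' j = 0 := by rw [hA' j, if_neg hji, if_neg hjN]
      simp [hl'def, hz1, hz2]
    have h4 : 0 ≤ ∑ j, l' j := by
      have heq : ∑ j, l' j = (1-t) * (∑ j, l j) + t * (∑ j, A' j) := by
        simp only [hl'def]
        rw [Finset.sum_add_distrib, ← Finset.mul_sum, Finset.sum_sub_distrib]
        ring
      rw [heq]; exact htsum
    have hle := hopt l' h1 h2 h3 h4
    have hexp : ∑ j, (A i j - l' j)^2
        = ∑ j, (A i j - l j)^2 - 2*t*(∑ j, (A i j - l j)*(A' j - l j))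
          + t^2 * (∑ j, (A' j - l j)^2) := by
      rw [Finset.mul_sum, Finset.mul_sum, ← Finset.sum_sub_distrib,
        ← Finset.sum_add_distrib]
      apply Finset.sum_congr rfl
      intro j _
      simp only [hl'def]; ring
    rw [hexp] at hle
    have hS : 0 ≤ ∑ j, (A' j - l j)^2 := Finset.sum_nonneg fun j _ => sq_nonneg _
    have hD : (∑ j, (A' j - l j)^2) ≤ ∑ j, (A i j - l j)*(A' j - l j) :=
      Finset.sum_le_sum fun j _ => hproj j
    have e1 : 2*t*(∑ j, (A i j - l j)*(A' j - l j)) ≤ t^2 * (∑ j, (A' j - l j)^2) := by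
      linarith
    have e2 := mul_le_mul_of_nonneg_left hD (by linarith : (0:ℝ) ≤ 2*t)
    have e3 : t^2 * (∑ j, (A' j - l j)^2) ≤ t * (∑ j, (A' j - l j)^2) := by
      nlinarith [mul_nonneg (mul_nonneg ht0.le (sub_nonneg.mpr ht1)) hS]
    have e4 : t * (∑ j, (A' j - l j)^2) ≤ 0 := by linarith
    have hzero : ∑ j, (A' j - l j)^2 = 0 := by
      by_contra hc
      have hc' : 0 < ∑ j, (A' j - l j)^2 := lt_of_le_of_ne hS (Ne.symm hc)
      nlinarith [mul_pos ht0 hc']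
    intro j
    have hj := (Finset.sum_eq_zero_iff_of_nonneg
      (fun j _ => sq_nonneg (A' j - l j))).mp hzero j (Finset.mem_univ j)
    nlinarith [hj]
  have hmain : (0 < ∑ j, A' j ∨ 0 < ∑ j, l j) → ∑ j, l j = ∑ j, A' j := by
    intro h
    have hall : ∀ j, l j = A' j := by
      rcases le_or_gt 0 (∑ j, A' j) with hA | hA
      · exact key 1 one_pos le_rfl (by nlinarith)
      · rcases h with h | h
        · linarith
        · refine key ((∑ j, l j)/((∑ j, l j) - (∑ j, A' j))) ?_ ?_ ?_
          · apply div_pos h; linarith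
          · rw [div_le_one (by linarith)]; linarith
          · have hne : (∑ j, l j) - (∑ j, A' j) ≠ 0 := by linarith
            have heq : (1 - (∑ j, l j)/((∑ j, l j) - (∑ j, A' j))) * (∑ j, l j)
                + ((∑ j, l j)/((∑ j, l j) - (∑ j, A' j))) * (∑ j, A' j) = 0 := by
              field_simp
              ring
            rw [heq]
    exact Finset.sum_congr rfl fun j _ => hall j
  constructor
  · intro h; have := hmain (Or.inr h); linarith
  · intro h; have := hmain (Or.inl h); linarith
end

section
/- Let b ∈ ℝ^d satisfy b_1 < 0 and b_k ≤ (k+1)b_{k−1} − S_{k−1} for k = 2,…,d, where S_k are partial sums. Then 0 > b_1 > b_2 > ⋯ > b_d and b_k ≤ 2^{k−1} b_1 for all k; moreover for each k ∈ {2,…,d}, b_k < S_k/(1+k) and b_j ≥ S_k/(1+k) for all j < k. -/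
/-!
Write `S_m = b_1 + ⋯ + b_m`. If `b` is antitone on `[1, m]`, then `S_m ≥ m b_m`, so the recursion gives
`b_{m+1} ≤ (m + 2) b_m - m b_m = 2 b_m`; since `b_1 < 0`, induction makes `b` negative and strictly
decreasing, with `b_k ≤ 2^{k-1} b_1`. The number `S_k / (k + 1)` is the mean of `b_1, …, b_k, 0`, so the
negative minimum `b_k` lies strictly below it, while the recursion is exactly `S_k ≤ (k + 1) b_{k-1}`.
-/

open Finset

lemma StrictAntiOn.Icc_add_one {β : Type*} [Preorder β] {f : ℕ → β} {a n : ℕ}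
    (h : StrictAntiOn f (Set.Icc a n)) (hn : f (n + 1) < f n) :
    StrictAntiOn f (Set.Icc a (n + 1)) := by
  refine strictAntiOn_of_add_one_lt Set.ordConnected_Icc fun i _ hi hi1 => ?_
  rcases Nat.lt_or_ge i n with hin | hin
  · exact h ⟨hi.1, hin.le⟩ ⟨hi.1.trans (Nat.le_succ i), hin⟩ (Nat.lt_succ_self i)
  · obtain rfl : i = n := le_antisymm (Nat.le_of_succ_le_succ hi1.2) hin
    exact hn

lemma card_mul_le_sum_Icc_of_antitoneOn {b : ℕ → ℝ} {m : ℕ} (h : AntitoneOn b (Set.Icc 1 m)) :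
    m * b m ≤ ∑ i ∈ Icc 1 m, b i := by
  have hle : ∀ i ∈ Icc 1 m, b m ≤ b i := fun i hi => by
    rw [mem_Icc] at hi
    exact h hi ⟨hi.1.trans hi.2, le_rfl⟩ hi.2
  simpa [nsmul_eq_mul] using card_nsmul_le_sum (Icc 1 m) b (b m) hle

lemma add_one_mul_lt_sum_Icc {b : ℕ → ℝ} {k : ℕ} (h : AntitoneOn b (Set.Icc 1 k)) (hk : b k < 0) :
    (1 + k) * b k < ∑ i ∈ Icc 1 k, b i := by
  linarith [card_mul_le_sum_Icc_of_antitoneOn h]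

def WorstCaseRecursion (d : ℕ) (b : ℕ → ℝ) : Prop :=
  ∀ m, 1 ≤ m → m + 1 ≤ d → b (m + 1) ≤ ((m : ℝ) + 2) * b m - ∑ i ∈ Icc 1 m, b i

namespace WorstCaseRecursion

variable {d : ℕ} {b : ℕ → ℝ}

lemma sum_Icc_add_one_le (h : WorstCaseRecursion d b) {m : ℕ} (hm : 1 ≤ m) (hmd : m + 1 ≤ d) :
    ∑ i ∈ Icc 1 (m + 1), b i ≤ ((m : ℝ) + 2) * b m := by
  rw [sum_Icc_succ_top (by omega)]
  linarith [h m hm hmd]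

lemma le_two_mul_of_antitoneOn (h : WorstCaseRecursion d b) {m : ℕ} (hm : 1 ≤ m)
    (hmd : m + 1 ≤ d) (hanti : AntitoneOn b (Set.Icc 1 m)) : b (m + 1) ≤ 2 * b m := by
  linarith [h m hm hmd, card_mul_le_sum_Icc_of_antitoneOn hanti]

lemma strictAntiOn (h : WorstCaseRecursion d b) (hb1 : b 1 < 0) :
    StrictAntiOn b (Set.Icc 1 d) := by
  rcases Nat.eq_zero_or_pos d with rfl | hd
  · simp [StrictAntiOn]
  refine Nat.le_induction (m := 1) (P := fun n _ => n ≤ d → StrictAntiOn b (Set.Icc 1 n))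
    (fun _ => by simp) (fun n hn ih hnd => ?_) d hd le_rfl
  have hanti := ih (by omega)
  have hbn : b n < 0 := (hanti.antitoneOn ⟨le_rfl, hn⟩ ⟨hn, le_rfl⟩ hn).trans_lt hb1
  have hdouble := h.le_two_mul_of_antitoneOn hn hnd hanti.antitoneOn
  exact hanti.Icc_add_one (by linarith)

lemma le_two_mul (h : WorstCaseRecursion d b) (hb1 : b 1 < 0) {m : ℕ} (hm : 1 ≤ m)
    (hmd : m + 1 ≤ d) : b (m + 1) ≤ 2 * b m :=
  h.le_two_mul_of_antitoneOn hm hmd <|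
    (h.strictAntiOn hb1).antitoneOn.mono (Set.Icc_subset_Icc_right (by omega))

lemma le_two_pow_mul (h : WorstCaseRecursion d b) (hb1 : b 1 < 0) :
    ∀ m, m + 1 ≤ d → b (m + 1) ≤ 2 ^ m * b 1
  | 0, _ => by simp
  | m + 1, hmd => by
    have ih := le_two_pow_mul h hb1 m (by omega)
    calc b (m + 1 + 1) ≤ 2 * b (m + 1) := h.le_two_mul hb1 (by omega) hmd
      _ ≤ 2 * (2 ^ m * b 1) := by linarith
      _ = 2 ^ (m + 1) * b 1 := by ring

end WorstCaseRecursion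

theorem stmt16 (d : ℕ) (b : ℕ → ℝ)
    (hb1 : b 1 < 0)
    (hrec : ∀ k, 2 ≤ k → k ≤ d →
      b k ≤ ((k : ℝ) + 1) * b (k - 1) - ∑ i ∈ Finset.Icc 1 (k - 1), b i) :
    (∀ k, 2 ≤ k → k ≤ d → b k < b (k - 1)) ∧
    (∀ k, 1 ≤ k → k ≤ d → b k ≤ 2 ^ (k - 1) * b 1) ∧
    (∀ k, 2 ≤ k → k ≤ d →
      b k < (∑ i ∈ Finset.Icc 1 k, b i) / (1 + (k : ℝ)) ∧
      ∀ j, 1 ≤ j → j < k →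
        (∑ i ∈ Finset.Icc 1 k, b i) / (1 + (k : ℝ)) ≤ b j) := by
  have h : WorstCaseRecursion d b := fun m hm hmd => by
    have := hrec (m + 1) (by omega) hmd
    push_cast at this
    simpa [add_assoc, one_add_one_eq_two] using this
  have hanti := h.strictAntiOn hb1
  refine ⟨fun k hk hkd => hanti ⟨by omega, by omega⟩ ⟨by omega, hkd⟩ (by omega), fun k hk hkd => ?_,
    fun k hk hkd => ⟨?_, fun j hj hjk => ?_⟩⟩
  · obtain ⟨m, rfl⟩ : ∃ m, k = m + 1 := ⟨k - 1, by omega⟩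
    simpa using h.le_two_pow_mul hb1 m hkd
  · have hbk : b k < 0 := (hanti.antitoneOn ⟨le_rfl, by omega⟩ ⟨by omega, hkd⟩ (by omega)).trans_lt hb1
    rw [lt_div_iff₀ (by positivity), mul_comm]
    exact add_one_mul_lt_sum_Icc (hanti.antitoneOn.mono (Set.Icc_subset_Icc_right hkd)) hbk
  · obtain ⟨m, rfl⟩ : ∃ m, k = m + 1 := ⟨k - 1, by omega⟩
    have hbj : b m ≤ b j := hanti.antitoneOn ⟨hj, by omega⟩ ⟨by omega, by omega⟩ (by omega)
    rw [div_le_iff₀ (by positivity)]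
    calc ∑ i ∈ Icc 1 (m + 1), b i ≤ ((m : ℝ) + 2) * b m := h.sum_Icc_add_one_le (by omega) hkd
      _ = b m * (1 + ((m + 1 : ℕ) : ℝ)) := by push_cast; ring
      _ ≤ b j * (1 + ((m + 1 : ℕ) : ℝ)) := by gcongr
end
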